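/- For a finite set S of n ≥ 3 points in general position in ℝ² and any q ∈ ℝ², the normalized spherical depth is at least two thirds of the normalized simplicial depth: SphD(q;S) ≥ (2/3)·SD(q;S). -/

import Mathlib

open scoped RealInnerProductSpace Classical

/-- Number of (unordered) pairs of points of `S` whose diameter disk contains `q`. -/
noncomputable def diskPairCount (q : EuclideanSpace ℝ (Fin 2))
    (S : Finset (EuclideanSpace ℝ (Fin 2))) : ℕ :=
  ((S.powersetCard 2).filter
    (fun P => ∃ x ∈ P, ∃ y ∈ P, x ≠ y ∧ ⟪x - q, y - q⟫ ≤ 0)).card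

/-- Number of triples of points of `S` whose closed triangle contains `q`. -/
noncomputable def triangleCount (q : EuclideanSpace ℝ (Fin 2))
    (S : Finset (EuclideanSpace ℝ (Fin 2))) : ℕ :=
  ((S.powersetCard 3).filter (fun T => q ∈ convexHull ℝ (T : Set _))).card

/-! If `q` lies in the triangle `xyz`, some vertex `u` satisfies `⟪u - q, v - q⟫ ≤ 0` for both
other vertices `v`: otherwise the open half-plane `{v | 0 < ⟪u - q, v - q⟫}` would contain the
triangle but not `q`. So every triangle containing `q` contains at least two pairs whose diameter
disk contains `q`, while each pair of `S` lies in exactly `n - 2` triangles of `S`. Double counting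
gives `2 T ≤ (n - 2) B`, and `3 C(n,3) = (n - 2) C(n,2)` turns this into the claim. -/

section InnerProductSpace

variable {E : Type*} [NormedAddCommGroup E] [InnerProductSpace ℝ E]

theorem notMem_convexHull_of_forall_inner_pos {s : Set E} {q u : E}
    (h : ∀ v ∈ s, 0 < ⟪u - q, v - q⟫) : q ∉ convexHull ℝ s := by
  intro hq
  have hs : s ⊆ {v | ⟪u - q, q⟫ < ⟪u - q, v⟫} := fun v hv => by
    simpa [inner_sub_right] using h v hv
  have hqq : ⟪u - q, q⟫ < ⟪u - q, q⟫ :=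
    convexHull_min hs (convex_halfSpace_gt (innerₛₗ ℝ (u - q)).isLinear _) hq
  exact hqq.false

theorem exists_forall_inner_nonpos_of_mem_convexHull {T : Finset E} {q : E} (hT : T.card = 3)
    (hq : q ∈ convexHull ℝ (T : Set E)) : ∃ u ∈ T, ∀ v ∈ T, v ≠ u → ⟪u - q, v - q⟫ ≤ 0 := by
  obtain ⟨x, y, z, -, -, -, rfl⟩ := Finset.card_eq_three.1 hT
  have hmem : ∀ {u v w}, ({u, v, w} : Set E) = {x, y, z} → q ∈ convexHull ℝ {u, v, w} := by
    intro u v w h; rw [h]; simpa using hq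
  have not_acute : ∀ {u v w}, ({u, v, w} : Set E) = {x, y, z} →
      0 < ⟪u - q, v - q⟫ → 0 < ⟪u - q, w - q⟫ → False := by
    intro u v w h huv huw
    have hu : u - q ≠ 0 := by rintro h; simp [h] at huv
    refine notMem_convexHull_of_forall_inner_pos (u := u) ?_ (hmem h)
    rintro _ (rfl | rfl | rfl)
    exacts [real_inner_self_pos.2 hu, huv, huw]
  have vertex : ∀ {u v w}, ({u, v, w} : Set E) = {x, y, z} → ⟪u - q, v - q⟫ ≤ 0 →
      ⟪u - q, w - q⟫ ≤ 0 → ∃ u ∈ ({x, y, z} : Finset E), ∀ t ∈ ({x, y, z} : Finset E), t ≠ u →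
        ⟪u - q, t - q⟫ ≤ 0 := by
    intro u v w h huv huw
    simp only [← Finset.mem_coe, Finset.coe_insert, Finset.coe_singleton, ← h]
    refine ⟨u, by simp, ?_⟩
    rintro _ (rfl | rfl | rfl) ht
    exacts [absurd rfl ht, huv, huw]
  have hyxz : ({y, x, z} : Set E) = {x, y, z} := Set.insert_comm _ _ _
  have hzxy : ({z, x, y} : Set E) = {x, y, z} := by ext; simp; tauto
  rcases le_or_gt ⟪x - q, y - q⟫ 0 with hxy | hxy
  · rcases le_or_gt ⟪x - q, z - q⟫ 0 with hxz | hxz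
    · exact vertex rfl hxy hxz
    · refine vertex hyxz (by rwa [real_inner_comm]) (le_of_not_gt fun hyz => ?_)
      exact not_acute hzxy (by rwa [real_inner_comm]) (by rwa [real_inner_comm])
  · refine vertex hzxy (le_of_not_gt fun hzx => ?_) (le_of_not_gt fun hzy => ?_)
    · exact not_acute rfl hxy (by rwa [real_inner_comm])
    · exact not_acute hyxz (by rwa [real_inner_comm]) (by rwa [real_inner_comm])


theorem two_le_card_filter_subset_of_mem_convexHull {S T : Finset E} {q : E} (hTS : T ⊆ S)
    (hT : T.card = 3) (hq : q ∈ convexHull ℝ (T : Set E)) :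
    2 ≤ (((S.powersetCard 2).filter
      (fun P => ∃ x ∈ P, ∃ y ∈ P, x ≠ y ∧ ⟪x - q, y - q⟫ ≤ 0)).filter (· ⊆ T)).card := by
  obtain ⟨u, hu, hobtuse⟩ := exists_forall_inner_nonpos_of_mem_convexHull hT hq
  calc 2 = (T.erase u).card := by rw [Finset.card_erase_of_mem hu, hT]
    _ ≤ _ := by
      refine Finset.card_le_card_of_injOn (fun v => {u, v}) (fun v hv => ?_) ?_
      · obtain ⟨hvu, hvT⟩ := Finset.mem_erase.1 hv
        refine Finset.mem_filter.2 ⟨Finset.mem_filter.2 ⟨Finset.mem_powersetCard.2 ⟨?_, ?_⟩, ?_⟩, ?_⟩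
        · exact Finset.insert_subset (hTS hu) (Finset.singleton_subset_iff.2 (hTS hvT))
        · exact Finset.card_pair hvu.symm
        · exact ⟨u, by simp, v, by simp, hvu.symm, hobtuse v hvT hvu⟩
        · exact Finset.insert_subset hu (Finset.singleton_subset_iff.2 hvT)
      · intro v hv w _ hvw
        have hv' : v ∈ ({u, w} : Finset E) := by
          rw [← show ({u, v} : Finset E) = {u, w} from hvw]; simp
        simpa [(Finset.mem_erase.1 hv).1] using hv'

end InnerProductSpace

-- The coercion `(T : Set _)` in `triangleCount` is elaborated through the `Finset` monad, so
-- `triangleCount` filters the image of `S.powersetCard 3` in `Finset (Set _)`.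
theorem triangleCount_eq_card_filter (q : EuclideanSpace ℝ (Fin 2))
    (S : Finset (EuclideanSpace ℝ (Fin 2))) :
    triangleCount q S = ((S.powersetCard 3).filter
      (fun T : Finset _ => q ∈ convexHull ℝ (T : Set (EuclideanSpace ℝ (Fin 2))))).card := by
  rw [triangleCount, bind_pure_comp, Finset.fmap_def, Finset.filter_image]
  exact Finset.card_image_of_injective _ Finset.coe_injective

theorem two_mul_triangleCount_le (q : EuclideanSpace ℝ (Fin 2))
    (S : Finset (EuclideanSpace ℝ (Fin 2))) :
    2 * triangleCount q S ≤ diskPairCount q S * (S.card - 2) := by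
  rw [triangleCount_eq_card_filter, diskPairCount, mul_comm]
  refine Finset.card_mul_le_card_mul (fun T P => P ⊆ T) (fun T hT => ?_) (fun P hP => ?_)
  · obtain ⟨hT, hq⟩ := Finset.mem_filter.1 hT
    obtain ⟨hTS, hT3⟩ := Finset.mem_powersetCard.1 hT
    unfold Finset.bipartiteAbove
    convert two_le_card_filter_subset_of_mem_convexHull hTS hT3 hq
  · obtain ⟨hPS, hP⟩ := Finset.mem_powersetCard.1 (Finset.mem_filter.1 hP).1
    calc _ ≤ ((S.powersetCard 3).filter (P ⊆ ·)).card :=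
          Finset.card_le_card (Finset.filter_subset_filter _ (Finset.filter_subset _ _))
      _ = S.card - 2 := by
        rw [Finset.card_filter_powersetCard_subset _ _ _ hPS (by omega), hP, Nat.choose_one_right]

theorem two_thirds_mul_div_choose_three_le_div_choose_two {B T n : ℕ}
    (h : 2 * T ≤ B * (n - 2)) : 2 / 3 * ((T : ℝ) / n.choose 3) ≤ B / n.choose 2 := by
  have hchoose : (3 * n.choose 3 : ℝ) = n.choose 2 * (n - 2 : ℕ) := by
    exact_mod_cast (mul_comm _ _).trans (Nat.choose_succ_right_eq n 2)
  calc 2 / 3 * ((T : ℝ) / n.choose 3) = (2 * T : ℕ) / (n.choose 2 * (n - 2 : ℕ)) := by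
        rw [← hchoose]; push_cast; ring
    _ ≤ (B * (n - 2) : ℕ) / (n.choose 2 * (n - 2 : ℕ)) := by gcongr
    _ ≤ B / n.choose 2 := by
      rw [Nat.cast_mul]
      rcases eq_or_ne ((n - 2 : ℕ) : ℝ) 0 with h0 | h0
      · rw [h0, mul_zero, mul_zero, div_zero]; positivity
      · rw [mul_div_mul_right _ _ h0]

theorem sphericalDepth_ge_two_thirds_simplicialDepth_general
    (S : Finset (EuclideanSpace ℝ (Fin 2))) (n : ℕ) (hn : S.card = n)
    (q : EuclideanSpace ℝ (Fin 2)) :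
    (diskPairCount q S : ℝ) / (n.choose 2) ≥
      (2 / 3) * ((triangleCount q S : ℝ) / (n.choose 3)) :=
  two_thirds_mul_div_choose_three_le_div_choose_two (hn ▸ two_mul_triangleCount_le q S)

theorem sphericalDepth_ge_two_thirds_simplicialDepth
    (S : Finset (EuclideanSpace ℝ (Fin 2))) (n : ℕ) (hn : S.card = n) (h3 : 3 ≤ n)
    (hgp : ∀ x ∈ S, ∀ y ∈ S, ∀ z ∈ S, x ≠ y → y ≠ z → x ≠ z →
      ¬ Collinear ℝ ({x, y, z} : Set (EuclideanSpace ℝ (Fin 2))))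
    (q : EuclideanSpace ℝ (Fin 2)) :
    (diskPairCount q S : ℝ) / (n.choose 2) ≥
      (2 / 3) * ((triangleCount q S : ℝ) / (n.choose 3)) :=
  sphericalDepth_ge_two_thirds_simplicialDepth_general S n hn q
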